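/- Let A be a ring with enough idempotents and F a unital left A-module of type FP₂. Then for any family {N_α}_{α∈S} of unital right A-modules there is an isomorphism Tor₁^A(∏^u_{α∈S} N_α, F) ≅ ∏_{α∈S} Tor₁^A(N_α, F), where ∏^u denotes the product in the category of unital right A-modules. -/

import Mathlib

/-!
`Tor₁` may be computed from any presentation `0 → K → P → F → 0` with `P` finite free instead of
the canonical one: lifting each cover along the other gives maps of kernels that are mutually
inverse up to a homotopy, so they identify `ker (X ⊗ K → X ⊗ P)` with `Tor₁^A(X, F)`.
The natural map `(∏ᵘ_α N_α) ⊗_A M → ∏_α (N_α ⊗_A M)` is bijective for `M = ⊕ⱼ A·eⱼ`, because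
`(∏ᵘ N)·eⱼ = ∏ (N_α·eⱼ)`, hence, by right exactness, for every finitely presented `M`. As `F` is
of type `FP₂`, `K` is finitely presented, and the kernels of `X ⊗ K → X ⊗ P` for `X = ∏ᵘ N_α`
and `X = N_α` correspond.
-/

open MulOpposite

universe u v w w' w₂ w₃

namespace EIMod

/-- A premodule over a nonunital ring `A`: an additive group with an associative,
biadditive scalar multiplication. -/
class PreMod (A : Type u) (M : Type w) [NonUnitalRing A] [AddCommGroup M] extends SMul A M where
  smul_add' : ∀ (a : A) (m n : M), a • (m + n) = a • m + a • n
  add_smul' : ∀ (a b : A) (m : M), (a + b) • m = a • m + b • m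
  mul_smul' : ∀ (a b : A) (m : M), (a * b) • m = a • (b • m)

namespace PreMod

variable {A : Type u} [NonUnitalRing A]

section Lemmas

variable {M : Type w} [AddCommGroup M] [PreMod A M]

lemma psmul_zero (a : A) : a • (0 : M) = 0 := by
  have h := smul_add' a (0 : M) 0
  rw [add_zero] at h
  exact (left_eq_add.mp h)

lemma psmul_neg (a : A) (m : M) : a • (-m) = -(a • m) := by
  have h := smul_add' a m (-m)
  rw [add_neg_cancel, psmul_zero] at h
  exact (eq_neg_of_add_eq_zero_right h.symm)

lemma pzero_smul (m : M) : (0 : A) • m = 0 := by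
  have h := add_smul' (0 : A) 0 m
  rw [add_zero] at h
  exact (left_eq_add.mp h)

lemma pneg_smul (a : A) (m : M) : (-a) • m = -(a • m) := by
  have h := add_smul' a (-a) m
  rw [add_neg_cancel, pzero_smul] at h
  exact (eq_neg_of_add_eq_zero_right h.symm)

/-- Scalar multiplication by a fixed `a : A` as an additive map. -/
def smulHom (M : Type w) [AddCommGroup M] [PreMod A M] (a : A) : M →+ M :=
  AddMonoidHom.mk' (fun m => a • m) (smul_add' a)

@[simp] lemma smulHom_apply (a : A) (m : M) : smulHom M a m = a • m := rfl

end Lemmas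

instance : PreMod A A where
  smul := (· * ·)
  smul_add' := mul_add
  add_smul' := add_mul
  mul_smul' := mul_assoc

lemma smul_def (a b : A) : a • b = a * b := rfl

instance : PreMod Aᵐᵒᵖ A where
  smul a x := x * a.unop
  smul_add' a m n := add_mul m n a.unop
  add_smul' a b m := by show m * (a + b).unop = m * a.unop + m * b.unop; rw [unop_add, mul_add]
  mul_smul' a b m := by
    show m * (a * b).unop = (m * b.unop) * a.unop
    rw [unop_mul, mul_assoc]

lemma op_smul_def (a : Aᵐᵒᵖ) (x : A) : a • x = x * a.unop := rfl

instance instPi {ι : Type v} (β : ι → Type w) [∀ i, AddCommGroup (β i)]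
    [∀ i, PreMod A (β i)] : PreMod A (∀ i, β i) where
  smul a f i := a • f i
  smul_add' a f g := funext fun i => smul_add' a (f i) (g i)
  add_smul' a b f := funext fun i => add_smul' a b (f i)
  mul_smul' a b f := funext fun i => mul_smul' a b (f i)

lemma pi_smul_apply {ι : Type v} {β : ι → Type w} [∀ i, AddCommGroup (β i)]
    [∀ i, PreMod A (β i)] (a : A) (f : ∀ i, β i) (i : ι) : (a • f) i = a • f i := rfl

noncomputable instance instFinsupp {σ : Type v} : PreMod A (σ →₀ A) where
  smul a f := Finsupp.mapRange (a * ·) (mul_zero a) f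
  smul_add' a f g := by
    ext s
    simp [Finsupp.mapRange_apply, mul_add]
  add_smul' a b f := by
    ext s
    simp [Finsupp.mapRange_apply, add_mul]
  mul_smul' a b f := by
    ext s
    simp [Finsupp.mapRange_apply, mul_assoc]

lemma finsupp_smul_single {σ : Type v} (a : A) (s : σ) (b : A) :
    a • (Finsupp.single s b) = Finsupp.single s (a * b) := by
  show Finsupp.mapRange (a * ·) (mul_zero a) (Finsupp.single s b) = _
  rw [Finsupp.mapRange_single]

end PreMod

open PreMod

variable (A : Type u) [NonUnitalRing A]

/-- The additive subgroup of `A`-linear additive maps between two premodules. -/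
def LHom (M : Type w) (N : Type w') [AddCommGroup M] [AddCommGroup N]
    [PreMod A M] [PreMod A N] : AddSubgroup (M →+ N) where
  carrier := {f | ∀ (a : A) (m : M), f (a • m) = a • f m}
  add_mem' := by
    intro f g hf hg a m
    simp only [AddMonoidHom.add_apply, hf a m, hg a m, PreMod.smul_add']
  zero_mem' := by
    intro a m
    simp [PreMod.psmul_zero]
  neg_mem' := by
    intro f hf a m
    simp [hf a m, PreMod.psmul_neg]

lemma mem_LHom {M : Type w} {N : Type w'} [AddCommGroup M] [AddCommGroup N]
    [PreMod A M] [PreMod A N] (f : M →+ N) :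
    f ∈ LHom A M N ↔ ∀ (a : A) (m : M), f (a • m) = a • f m := Iff.rfl

/-- A complete family of orthogonal idempotents for a nonunital ring:
`A` is a ring with enough idempotents. -/
class EnoughIdems {I : Type v} (e : I → A) : Prop where
  idem : ∀ i, e i * e i = e i
  orth : ∀ i j, i ≠ j → e i * e j = 0
  memLeft : ∀ a : A, a ∈ AddSubgroup.closure {x : A | ∃ i b, x = e i * b}
  memRight : ∀ a : A, a ∈ AddSubgroup.closure {x : A | ∃ i b, x = b * e i}

section OpInstance

variable {A}

lemma op_mem_closure {s : Set A} {t : Set Aᵐᵒᵖ} (hst : ∀ x ∈ s, op x ∈ t) {a : A}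
    (ha : a ∈ AddSubgroup.closure s) : op a ∈ AddSubgroup.closure t := by
  refine AddSubgroup.closure_induction
    (fun x hx => AddSubgroup.subset_closure (hst x hx)) (by rw [op_zero]; exact zero_mem _)
    (fun x y _ _ hx hy => by rw [op_add]; exact add_mem hx hy)
    (fun x _ hx => by rw [op_neg]; exact neg_mem hx) ha

lemma unop_mem_closure {s : Set Aᵐᵒᵖ} {t : Set A} (hst : ∀ x ∈ s, unop x ∈ t) {a : Aᵐᵒᵖ}
    (ha : a ∈ AddSubgroup.closure s) : unop a ∈ AddSubgroup.closure t := by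
  refine AddSubgroup.closure_induction
    (fun x hx => AddSubgroup.subset_closure (hst x hx)) (by rw [unop_zero]; exact zero_mem _)
    (fun x y _ _ hx hy => by rw [unop_add]; exact add_mem hx hy)
    (fun x _ hx => by rw [unop_neg]; exact neg_mem hx) ha

instance EnoughIdems.instOp {I : Type v} (e : I → A) [EnoughIdems A e] :
    EnoughIdems Aᵐᵒᵖ (fun i => op (e i)) where
  idem i := by rw [← op_mul, idem (e := e) i]
  orth i j h := by
    rw [← op_mul, orth (e := e) j i (Ne.symm h), op_zero]
  memLeft a := by
    have := op_mem_closure (s := {x : A | ∃ i b, x = b * e i})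
      (t := {x : Aᵐᵒᵖ | ∃ i b, x = op (e i) * b}) ?_ (memRight (e := e) a.unop)
    · simpa using this
    · rintro x ⟨i, b, rfl⟩
      exact ⟨i, op b, by rw [← op_mul]⟩
  memRight a := by
    have := op_mem_closure (s := {x : A | ∃ i b, x = e i * b})
      (t := {x : Aᵐᵒᵖ | ∃ i b, x = b * op (e i)}) ?_ (memLeft (e := e) a.unop)
    · simpa using this
    · rintro x ⟨i, b, rfl⟩
      exact ⟨i, op b, by rw [← op_mul]⟩

end OpInstance

section RA

variable {I : Type v} (e : I → A)

/-- `R_A(M) = ⊕ᵢ eᵢ M`, the largest unital submodule of a premodule `M`. -/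
def RA (M : Type w) [AddCommGroup M] [PreMod A M] : AddSubgroup M :=
  AddSubgroup.closure {x : M | ∃ (i : I) (y : M), x = e i • y}

variable {M : Type w} [AddCommGroup M] [PreMod A M]

lemma smul_mem_RA [EnoughIdems A e] (a : A) {m : M} (hm : m ∈ RA A e M) :
    a • m ∈ RA A e M := by
  have key : ∀ b : A, b ∈ AddSubgroup.closure {x : A | ∃ i c, x = e i * c} →
      ∀ y : M, b • y ∈ RA A e M := by
    intro b hb
    refine AddSubgroup.closure_induction ?_ ?_ ?_ ?_ hb
    · rintro x ⟨i, c, rfl⟩ y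
      rw [PreMod.mul_smul']
      exact AddSubgroup.subset_closure ⟨i, c • y, rfl⟩
    · intro y
      rw [PreMod.pzero_smul]
      exact zero_mem _
    · intro x y _ _ hx hy z
      rw [PreMod.add_smul']
      exact add_mem (hx z) (hy z)
    · intro x _ hx y
      rw [PreMod.pneg_smul]
      exact neg_mem (hx y)
  refine AddSubgroup.closure_induction ?_ ?_ ?_ ?_ hm
  · rintro x ⟨i, y, rfl⟩
    rw [← PreMod.mul_smul']
    exact key _ (EnoughIdems.memLeft (e := e) (a * e i)) y
  · rw [PreMod.psmul_zero]
    exact zero_mem _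
  · intro x y _ _ hx hy
    rw [PreMod.smul_add']
    exact add_mem hx hy
  · intro x _ hx
    rw [PreMod.psmul_neg]
    exact neg_mem hx

instance RA.instPreMod [EnoughIdems A e] : PreMod A ↥(RA A e M) where
  smul a x := ⟨a • x.1, smul_mem_RA A e a x.2⟩
  smul_add' a x y := Subtype.ext (PreMod.smul_add' a x.1 y.1)
  add_smul' a b x := Subtype.ext (PreMod.add_smul' a b x.1)
  mul_smul' a b x := Subtype.ext (PreMod.mul_smul' a b x.1)

lemma RA.coe_smul [EnoughIdems A e] (a : A) (x : ↥(RA A e M)) :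
    ((a • x : ↥(RA A e M)) : M) = a • (x : M) := rfl

/-- A premodule is unital when it coincides with its largest unital submodule. -/
def IsUnital (M : Type w) [AddCommGroup M] [PreMod A M] : Prop :=
  ∀ m : M, m ∈ RA A e M

end RA

section Ideals

/-- The left ideal `A·u = {x | x·u = x}` (for `u` idempotent), as a left premodule. -/
def rIdl (u : A) : AddSubgroup A where
  carrier := {x | x * u = x}
  zero_mem' := zero_mul u
  add_mem' := by
    intro x y hx hy
    show (x + y) * u = x + y
    rw [add_mul, hx, hy]
  neg_mem' := by
    intro x hx
    show (-x) * u = -x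
    rw [neg_mul, hx]

instance rIdl.instPreMod (u : A) : PreMod A ↥(rIdl A u) where
  smul a x := ⟨a * x.1, by
    have hx : x.1 * u = x.1 := x.2
    show (a * x.1) * u = a * x.1
    rw [mul_assoc, hx]⟩
  smul_add' a x y := Subtype.ext (mul_add a x.1 y.1)
  add_smul' a b x := Subtype.ext (add_mul a b x.1)
  mul_smul' a b x := Subtype.ext (mul_assoc a b x.1)

/-- The right ideal `u·A = {x | u·x = x}` (for `u` idempotent), as a right premodule. -/
def eIdl (u : A) : AddSubgroup A where
  carrier := {x | u * x = x}
  zero_mem' := mul_zero u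
  add_mem' := by
    intro x y hx hy
    show u * (x + y) = x + y
    rw [mul_add, hx, hy]
  neg_mem' := by
    intro x hx
    show u * (-x) = -x
    rw [mul_neg, hx]

instance eIdl.instPreMod (u : A) : PreMod Aᵐᵒᵖ ↥(eIdl A u) where
  smul a x := ⟨x.1 * a.unop, by
    have hx : u * x.1 = x.1 := x.2
    show u * (x.1 * a.unop) = x.1 * a.unop
    rw [← mul_assoc, hx]⟩
  smul_add' a x y := Subtype.ext (add_mul x.1 y.1 a.unop)
  add_smul' a b x := Subtype.ext (by show x.1 * (a + b).unop = x.1 * a.unop + x.1 * b.unop; rw [unop_add, mul_add])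
  mul_smul' a b x := Subtype.ext (by show x.1 * (a * b).unop = (x.1 * b.unop) * a.unop; rw [unop_mul, mul_assoc])

/-- The image `u•M` of scalar multiplication by `u`, as an additive subgroup. -/
def eSMulRange (u : A) (M : Type w) [AddCommGroup M] [PreMod A M] : AddSubgroup M :=
  (PreMod.smulHom M u).range

end Ideals

end EIMod
namespace EIMod

open PreMod MulOpposite

section Tensor

variable (A : Type u) [NonUnitalRing A]
variable (N : Type w) [AddCommGroup N] [PreMod Aᵐᵒᵖ N]
variable (M : Type w') [AddCommGroup M] [PreMod A M]

/-- Bilinearity and balancing relations defining the tensor product `N ⊗_A M`. -/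
def TensorRels : AddSubgroup (FreeAbelianGroup (N × M)) :=
  AddSubgroup.closure
    ({z | ∃ (n₁ : N) (n₂ : N) (m : M), z = FreeAbelianGroup.of (n₁ + n₂, m)
        - FreeAbelianGroup.of (n₁, m) - FreeAbelianGroup.of (n₂, m)} ∪
     {z | ∃ (n : N) (m₁ : M) (m₂ : M), z = FreeAbelianGroup.of (n, m₁ + m₂)
        - FreeAbelianGroup.of (n, m₁) - FreeAbelianGroup.of (n, m₂)} ∪
     {z | ∃ (n : N) (a : A) (m : M), z = FreeAbelianGroup.of (op a • n, m)
        - FreeAbelianGroup.of (n, a • m)})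

/-- The tensor product `N ⊗_A M` of a right `A`-premodule and a left `A`-premodule. -/
def Tensor : Type max w w' := FreeAbelianGroup (N × M) ⧸ TensorRels A N M

instance : AddCommGroup (Tensor A N M) :=
  inferInstanceAs (AddCommGroup (FreeAbelianGroup (N × M) ⧸ TensorRels A N M))

/-- The canonical generator `n ⊗ m` of `N ⊗_A M`. -/
def Tensor.mk (n : N) (m : M) : Tensor A N M :=
  QuotientAddGroup.mk (FreeAbelianGroup.of (n, m))

variable {A N M}
variable {N' : Type w₂} [AddCommGroup N'] [PreMod Aᵐᵒᵖ N']
variable {M' : Type w₃} [AddCommGroup M'] [PreMod A M']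

/-- Functoriality of the tensor product in both variables, with respect to `A`-linear maps. -/
noncomputable def Tensor.map (f : N →+ N') (g : M →+ M')
    (hf : ∀ (a : A) (n : N), f (op a • n) = op a • f n)
    (hg : ∀ (a : A) (m : M), g (a • m) = a • g m) :
    Tensor A N M →+ Tensor A N' M' :=
  QuotientAddGroup.map _ _ (FreeAbelianGroup.lift fun p => FreeAbelianGroup.of (f p.1, g p.2))
    (by
      refine (AddSubgroup.closure_le _).mpr ?_
      rintro z ((⟨n₁, n₂, m, rfl⟩ | ⟨n, m₁, m₂, rfl⟩) | ⟨n, a, m, rfl⟩) <;>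
        refine AddSubgroup.mem_comap.mpr ?_
      · rw [map_sub, map_sub, FreeAbelianGroup.lift_apply_of, FreeAbelianGroup.lift_apply_of,
          FreeAbelianGroup.lift_apply_of]
        exact AddSubgroup.subset_closure
          (Or.inl (Or.inl ⟨f n₁, f n₂, g m, by rw [map_add]⟩))
      · rw [map_sub, map_sub, FreeAbelianGroup.lift_apply_of, FreeAbelianGroup.lift_apply_of,
          FreeAbelianGroup.lift_apply_of]
        exact AddSubgroup.subset_closure
          (Or.inl (Or.inr ⟨f n, g m₁, g m₂, by rw [map_add]⟩))
      · rw [map_sub, FreeAbelianGroup.lift_apply_of, FreeAbelianGroup.lift_apply_of]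
        exact AddSubgroup.subset_closure
          (Or.inr ⟨f n, a, g m, by rw [hf, hg]⟩))

lemma Tensor.map_mk (f : N →+ N') (g : M →+ M')
    (hf : ∀ (a : A) (n : N), f (op a • n) = op a • f n)
    (hg : ∀ (a : A) (m : M), g (a • m) = a • g m) (n : N) (m : M) :
    Tensor.map f g hf hg (Tensor.mk A N M n m) = Tensor.mk A N' M' (f n) (g m) := by
  show QuotientAddGroup.map _ _ _ _ _ = _
  rw [Tensor.mk]
  exact congrArg (QuotientAddGroup.mk' (TensorRels A N' M')) (FreeAbelianGroup.lift_apply_of _ _)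

end Tensor

section TorExt

variable (A : Type u) [NonUnitalRing A] {I : Type v} (e : I → A)
variable (M : Type w) [AddCommGroup M] [PreMod A M]

/-- The canonical `A`-linear surjection from the canonical free cover
`(I × M) →₀ A` onto a unital module `M`, `single (i, m) a ↦ (a·eᵢ)·m`. -/
noncomputable def covHom : ((I × M) →₀ A) →+ M :=
  Finsupp.liftAddHom (fun p =>
    AddMonoidHom.mk' (fun a => (a * e p.1) • p.2)
      (fun a b => by
        show ((a + b) * e p.1) • p.2 = (a * e p.1) • p.2 + (b * e p.1) • p.2
        rw [add_mul, PreMod.add_smul']))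

lemma covHom_single (p : I × M) (a : A) :
    covHom A e M (Finsupp.single p a) = (a * e p.1) • p.2 := by
  rw [covHom, Finsupp.liftAddHom_apply_single]
  rfl

lemma covHom_linear (a : A) (f : (I × M) →₀ A) :
    covHom A e M (a • f) = a • covHom A e M f := by
  induction f using Finsupp.induction with
  | zero => rw [PreMod.psmul_zero, map_zero, PreMod.psmul_zero]
  | single_add p b f _ _ ih =>
    rw [PreMod.smul_add', map_add, map_add, PreMod.smul_add', ih,
      PreMod.finsupp_smul_single, covHom_single, covHom_single, mul_assoc,
      PreMod.mul_smul']

/-- The first syzygy of the canonical free cover of `M`. -/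
noncomputable def KK : AddSubgroup ((I × M) →₀ A) := (covHom A e M).ker

noncomputable instance KK.instPreMod : PreMod A ↥(KK A e M) where
  smul a x := ⟨a • x.1, by
    have hx : covHom A e M x.1 = 0 := x.2
    show covHom A e M (a • x.1) = 0
    rw [covHom_linear, hx, PreMod.psmul_zero]⟩
  smul_add' a x y := Subtype.ext (PreMod.smul_add' a x.1 y.1)
  add_smul' a b x := Subtype.ext (PreMod.add_smul' a b x.1)
  mul_smul' a b x := Subtype.ext (PreMod.mul_smul' a b x.1)

variable (N : Type w') [AddCommGroup N] [PreMod Aᵐᵒᵖ N]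

/-- The map `N ⊗_A K → N ⊗_A (⊕ A·eᵢ)` induced by the first syzygy of `M`. -/
noncomputable def torMap : Tensor A N ↥(KK A e M) →+ Tensor A N ((I × M) →₀ A) :=
  Tensor.map (AddMonoidHom.id N) ((KK A e M).subtype) (fun _ _ => rfl) (fun _ _ => rfl)

/-- `Tor₁^A(N, M)`, computed using the canonical free presentation of `M`. -/
noncomputable def Tor1 : AddSubgroup (Tensor A N ↥(KK A e M)) := (torMap A e M N).ker

variable (X : Type w') [AddCommGroup X] [PreMod A X]

/-- Restriction of `A`-linear maps along the inclusion of the first syzygy of `M`. -/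
noncomputable def resHom :
    ↥(LHom A ((I × M) →₀ A) X) →+ ↥(LHom A ↥(KK A e M) X) :=
  AddMonoidHom.mk'
    (fun g => ⟨((g : ((I × M) →₀ A) →+ X)).comp (KK A e M).subtype,
      fun a k => (g.2 : ∀ (a : A) (y : (I × M) →₀ A), (g : ((I × M) →₀ A) →+ X) (a • y)
        = a • (g : ((I × M) →₀ A) →+ X) y) a k.1⟩)
    (fun g g' => Subtype.ext (AddMonoidHom.ext (fun k => rfl)))

/-- `Ext¹_A(M, X)`, computed using the canonical free presentation of `M`. -/
noncomputable def Ext1 :=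
  (↥(LHom A ↥(KK A e M) X)) ⧸ (resHom A e M X).range

noncomputable instance : AddCommGroup (Ext1 A e M X) :=
  inferInstanceAs (AddCommGroup ((↥(LHom A ↥(KK A e M) X)) ⧸ (resHom A e M X).range))

end TorExt

section Character

/-- The divisible group `ℚ/ℤ`. -/
abbrev QZ : Type := AddCircle (1 : ℚ)

variable (A : Type u) [NonUnitalRing A] {I : Type v} (e : I → A)
variable (N : Type w) [AddCommGroup N] [PreMod Aᵐᵒᵖ N]

/-- The full character premodule `Hom_ℤ(N, ℚ/ℤ)` of a right `A`-premodule `N`,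
with action `(a·f)(n) = f(n·a)`. -/
instance instCharPreMod : PreMod A (N →+ QZ) where
  smul a f := f.comp (PreMod.smulHom N (op a))
  smul_add' a f g := by
    show (f + g).comp _ = f.comp _ + g.comp _
    rw [AddMonoidHom.add_comp]
  add_smul' a b f := by
    ext n
    show f (op (a + b) • n) = f (op a • n) + f (op b • n)
    rw [op_add, PreMod.add_smul', map_add]
  mul_smul' a b f := by
    ext n
    show f (op (a * b) • n) = f (op b • (op a • n))
    rw [op_mul, PreMod.mul_smul']

lemma char_smul_apply (a : A) (f : N →+ QZ) (n : N) :
    (a • f) n = f (op a • n) := rfl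

/-- The unital character module `N⁺ = ⊕ᵢ Hom_ℤ(N·eᵢ, ℚ/ℤ) = R_A(Hom_ℤ(N, ℚ/ℤ))`. -/
noncomputable abbrev CharMod [EnoughIdems A e] : Type w :=
  ↥(RA A e (N →+ QZ))

end Character

section FPn

variable (A : Type u) [NonUnitalRing A] {I : Type v} (e : I → A)

/-- A finite direct sum of standard left ideals `A·u j`. -/
abbrev FinFree {k : ℕ} (u : Fin k → A) : Type u := ∀ j : Fin k, ↥(rIdl A (u j))

/-- A left premodule over a ring with enough idempotents is of type `FPₙ` if it admits an
exact resolution `Pₙ → ⋯ → P₀ → F → 0` whose terms are finite direct sums of the standard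
projective modules `A·eᵢ`. -/
def IsFPn (n : ℕ) (F : Type w) [AddCommGroup F] [PreMod A F] : Prop :=
  ∃ (k : ℕ → ℕ) (ι : ∀ s : ℕ, Fin (k s) → I)
    (d : ∀ s : ℕ, ↥(LHom A (FinFree A fun j => e (ι (s + 1) j))
          (FinFree A fun j => e (ι s j))))
    (g : ↥(LHom A (FinFree A fun j => e (ι 0 j)) F)),
    Function.Surjective ⇑(g : (FinFree A fun j => e (ι 0 j)) →+ F) ∧
    (0 < n → AddMonoidHom.range
        ((d 0 : (FinFree A fun j => e (ι 1 j)) →+ (FinFree A fun j => e (ι 0 j))))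
      = AddMonoidHom.ker (g : (FinFree A fun j => e (ι 0 j)) →+ F)) ∧
    (∀ s : ℕ, s + 1 < n → AddMonoidHom.range
        ((d (s + 1) : (FinFree A fun j => e (ι (s + 2) j)) →+ (FinFree A fun j => e (ι (s + 1) j))))
      = AddMonoidHom.ker
        ((d s : (FinFree A fun j => e (ι (s + 1) j)) →+ (FinFree A fun j => e (ι s j)))))

end FPn

end EIMod

open EIMod PreMod MulOpposite

set_option maxHeartbeats 1000000

/-- The map `(∏^u_α N_α) ⊗_A K → N_α ⊗_A K` induced by the `α`-th projection from the
product `∏^u_α N_α = R_A(∏_α N_α)` of unital right `A`-modules. -/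
noncomputable def projTorMap
    (A : Type u) [NonUnitalRing A] {I : Type v} (e : I → A) [EnoughIdems A e]
    (S : Type w) (N : S → Type u) [∀ α, AddCommGroup (N α)] [∀ α, PreMod Aᵐᵒᵖ (N α)]
    (F : Type u) [AddCommGroup F] [PreMod A F] (α : S) :
    Tensor A (↥(RA Aᵐᵒᵖ (fun i => op (e i)) (∀ β, N β))) ↥(KK A e F)
      →+ Tensor A (N α) ↥(KK A e F) :=
  Tensor.map (A := A) (N' := N α)
    (AddMonoidHom.mk' (fun x : ↥(RA Aᵐᵒᵖ (fun i => op (e i)) (∀ β, N β)) => (x : ∀ β, N β) α)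
      (fun x y => rfl))
    (AddMonoidHom.id ↥(KK A e F)) (fun a n => by rfl) (fun a m => by rfl)


universe w₄ w₅

namespace EIMod

lemma PreMod.psmul_sub {A : Type u} [NonUnitalRing A] {M : Type w} [AddCommGroup M] [PreMod A M]
    (a : A) (m n : M) : a • (m - n) = a • m - a • n :=
  map_sub (smulHom M a) m n

lemma mem_RA_of_smul_eq {A : Type u} [NonUnitalRing A] {I : Type v} (e : I → A)
    {M : Type w} [AddCommGroup M] [PreMod A M] (i : I) {m : M} (hm : e i • m = m) :
    m ∈ RA A e M :=
  AddSubgroup.subset_closure ⟨i, m, hm.symm⟩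

section TensorBasics

variable {A : Type u} [NonUnitalRing A]
variable {N : Type w} [AddCommGroup N] [PreMod Aᵐᵒᵖ N]
variable {M : Type w'} [AddCommGroup M] [PreMod A M]

lemma Tensor.mk_add_left (n₁ n₂ : N) (m : M) :
    Tensor.mk A N M (n₁ + n₂) m = Tensor.mk A N M n₁ m + Tensor.mk A N M n₂ m := by
  have h := (QuotientAddGroup.eq_zero_iff (N := TensorRels A N M) _).mpr
    (AddSubgroup.subset_closure (Or.inl (Or.inl ⟨n₁, n₂, m, rfl⟩)))
  rwa [QuotientAddGroup.mk_sub, QuotientAddGroup.mk_sub, sub_sub, sub_eq_zero] at h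

lemma Tensor.mk_add_right (n : N) (m₁ m₂ : M) :
    Tensor.mk A N M n (m₁ + m₂) = Tensor.mk A N M n m₁ + Tensor.mk A N M n m₂ := by
  have h := (QuotientAddGroup.eq_zero_iff (N := TensorRels A N M) _).mpr
    (AddSubgroup.subset_closure (Or.inl (Or.inr ⟨n, m₁, m₂, rfl⟩)))
  rwa [QuotientAddGroup.mk_sub, QuotientAddGroup.mk_sub, sub_sub, sub_eq_zero] at h

lemma Tensor.mk_op_smul (a : A) (n : N) (m : M) :
    Tensor.mk A N M (op a • n) m = Tensor.mk A N M n (a • m) := by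
  have h := (QuotientAddGroup.eq_zero_iff (N := TensorRels A N M) _).mpr
    (AddSubgroup.subset_closure (Or.inr ⟨n, a, m, rfl⟩))
  rwa [QuotientAddGroup.mk_sub, sub_eq_zero] at h

def Tensor.mkLeft (m : M) : N →+ Tensor A N M :=
  AddMonoidHom.mk' (Tensor.mk A N M · m) (Tensor.mk_add_left · · m)

def Tensor.mkRight (n : N) : M →+ Tensor A N M :=
  AddMonoidHom.mk' (Tensor.mk A N M n) (Tensor.mk_add_right n)

@[simp] lemma Tensor.mk_zero_left (m : M) : Tensor.mk A N M 0 m = 0 :=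
  map_zero (Tensor.mkLeft m)

@[simp] lemma Tensor.mk_zero_right (n : N) : Tensor.mk A N M n 0 = 0 :=
  map_zero (Tensor.mkRight (A := A) n)

lemma Tensor.mk_neg_left (n : N) (m : M) : Tensor.mk A N M (-n) m = -Tensor.mk A N M n m :=
  map_neg (Tensor.mkLeft m) n

lemma Tensor.mk_sub_right (n : N) (m₁ m₂ : M) :
    Tensor.mk A N M n (m₁ - m₂) = Tensor.mk A N M n m₁ - Tensor.mk A N M n m₂ :=
  map_sub (Tensor.mkRight (A := A) n) m₁ m₂

lemma Tensor.mk_sum_right {ι : Type*} (s : Finset ι) (n : N) (m : ι → M) :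
    Tensor.mk A N M n (∑ j ∈ s, m j) = ∑ j ∈ s, Tensor.mk A N M n (m j) :=
  map_sum (Tensor.mkRight (A := A) n) m s

@[elab_as_elim]
lemma Tensor.induction_on {C : Tensor A N M → Prop} (z : Tensor A N M)
    (mk : ∀ n m, C (Tensor.mk A N M n m)) (add : ∀ x y, C x → C y → C (x + y)) : C z := by
  obtain ⟨w, rfl⟩ := QuotientAddGroup.mk_surjective z
  induction w using FreeAbelianGroup.induction_on with
  | zero =>
    have h := mk 0 (0 : M)
    rwa [Tensor.mk_zero_left] at h
  | of p => exact mk p.1 p.2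
  | neg p _ =>
    have h := mk (-p.1) p.2
    rwa [Tensor.mk_neg_left] at h
  | add x y hx hy => exact add _ _ hx hy

lemma Tensor.hom_ext {X : Type w₂} [AddCommGroup X] {f g : Tensor A N M →+ X}
    (hfg : ∀ n m, f (Tensor.mk A N M n m) = g (Tensor.mk A N M n m)) : f = g :=
  AddMonoidHom.ext fun z => Tensor.induction_on z hfg fun x y hx hy => by
    rw [map_add, map_add, hx, hy]

noncomputable def Tensor.lift {X : Type w₂} [AddCommGroup X] (b : N →+ M →+ X)
    (hb : ∀ (a : A) (n : N) (m : M), b (op a • n) m = b n (a • m)) :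
    Tensor A N M →+ X :=
  QuotientAddGroup.lift _ (FreeAbelianGroup.lift fun p => b p.1 p.2) <| by
    refine (AddSubgroup.closure_le _).mpr ?_
    rintro x ((⟨n₁, n₂, m, rfl⟩ | ⟨n, m₁, m₂, rfl⟩) | ⟨n, a, m, rfl⟩) <;>
      simp [FreeAbelianGroup.lift_apply_of, hb]

@[simp] lemma Tensor.lift_mk {X : Type w₂} [AddCommGroup X] (b : N →+ M →+ X)
    (hb : ∀ (a : A) (n : N) (m : M), b (op a • n) m = b n (a • m)) (n : N) (m : M) :
    Tensor.lift b hb (Tensor.mk A N M n m) = b n m :=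
  FreeAbelianGroup.lift_apply_of _ _

end TensorBasics

section LTensor

variable {A : Type u} [NonUnitalRing A] (X : Type w) [AddCommGroup X] [PreMod Aᵐᵒᵖ X]
variable {M : Type w'} [AddCommGroup M] [PreMod A M]
variable {M' : Type w₂} [AddCommGroup M'] [PreMod A M']
variable {M'' : Type w₃} [AddCommGroup M''] [PreMod A M'']

noncomputable def Tensor.lTensor (f : M →+ M') (hf : f ∈ LHom A M M') :
    Tensor A X M →+ Tensor A X M' :=
  Tensor.map (AddMonoidHom.id X) f (fun _ _ => rfl) hf

variable {X}

@[simp] lemma Tensor.lTensor_mk (f : M →+ M') (hf : f ∈ LHom A M M')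
    (n : X) (m : M) : Tensor.lTensor X f hf (Tensor.mk A X M n m) = Tensor.mk A X M' n (f m) :=
  Tensor.map_mk _ _ _ _ _ _

lemma Tensor.lTensor_lTensor_eq_of_comp_eq {L : Type w₄} [AddCommGroup L] [PreMod A L]
    (f : M →+ M') (hf : f ∈ LHom A M M')
    (g : M' →+ M'') (hg : g ∈ LHom A M' M'')
    (f' : M →+ L) (hf' : f' ∈ LHom A M L)
    (g' : L →+ M'') (hg' : g' ∈ LHom A L M'')
    (hcomm : ∀ m, g (f m) = g' (f' m)) (z : Tensor A X M) :
    Tensor.lTensor X g hg (Tensor.lTensor X f hf z)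
      = Tensor.lTensor X g' hg' (Tensor.lTensor X f' hf' z) :=
  Tensor.induction_on z (fun n m => by simp only [Tensor.lTensor_mk, hcomm])
    fun x y hx hy => by rw [map_add, map_add, hx, hy, map_add, map_add]

lemma Tensor.lTensor_lTensor_eq_zero
    (f : M →+ M') (hf : f ∈ LHom A M M')
    (g : M' →+ M'') (hg : g ∈ LHom A M' M'')
    (hgf : ∀ m, g (f m) = 0) (z : Tensor A X M) :
    Tensor.lTensor X g hg (Tensor.lTensor X f hf z) = 0 :=
  Tensor.induction_on z (fun n m => by simp only [Tensor.lTensor_mk, hgf, Tensor.mk_zero_right])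
    fun x y hx hy => by rw [map_add, map_add, hx, hy, add_zero]

lemma Tensor.lTensor_surjective (h : M →+ M') (hh : h ∈ LHom A M M')
    (hs : Function.Surjective h) : Function.Surjective (Tensor.lTensor X h hh) := by
  intro z
  induction z using Tensor.induction_on with
  | mk n m =>
    obtain ⟨m, rfl⟩ := hs m
    exact ⟨Tensor.mk A X M n m, Tensor.lTensor_mk h hh n m⟩
  | add x y hx hy =>
    obtain ⟨x, rfl⟩ := hx
    obtain ⟨y, rfl⟩ := hy
    exact ⟨x + y, map_add _ x y⟩

lemma Tensor.mk_mem_range_lTensor (f : M →+ M') (hf : f ∈ LHom A M M')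
    (n : X) {m' : M'} (hm : m' ∈ f.range) :
    Tensor.mk A X M' n m' ∈ (Tensor.lTensor X f hf).range := by
  obtain ⟨m, rfl⟩ := hm
  exact ⟨Tensor.mk A X M n m, Tensor.lTensor_mk f hf n m⟩

theorem Tensor.ker_lTensor_le_range
    (f : M'' →+ M) (hf : f ∈ LHom A M'' M)
    (h : M →+ M') (hh : h ∈ LHom A M M')
    (hs : Function.Surjective h) (hex : f.range = h.ker) :
    (Tensor.lTensor X h hh).ker ≤ (Tensor.lTensor X f hf).range := by
  set R := (Tensor.lTensor X f hf).range
  let σ := Function.surjInv hs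
  have hσ : ∀ m', h (σ m') = m' := Function.surjInv_eq hs
  -- `n ⊗ m` modulo `R` depends only on `h m`, so `n ⊗ h m ↦ [n ⊗ m]` is well defined.
  have key : ∀ (n : X) (m₁ m₂ : M), h m₁ = h m₂ →
      (Tensor.mk A X M n m₁ : Tensor A X M ⧸ R) = Tensor.mk A X M n m₂ := by
    intro n m₁ m₂ hm
    rw [QuotientAddGroup.eq_iff_sub_mem, ← Tensor.mk_sub_right]
    refine Tensor.mk_mem_range_lTensor f hf n ?_
    rw [hex, AddMonoidHom.mem_ker, map_sub, hm, sub_self]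
  let b : X →+ M' →+ Tensor A X M ⧸ R :=
    AddMonoidHom.mk' (fun n => AddMonoidHom.mk'
        (fun m' => (Tensor.mk A X M n (σ m') : Tensor A X M ⧸ R))
        (fun m₁ m₂ => by
          rw [key n (σ (m₁ + m₂)) (σ m₁ + σ m₂) (by rw [map_add, hσ, hσ, hσ]),
            Tensor.mk_add_right, QuotientAddGroup.mk_add]))
      (fun n₁ n₂ => AddMonoidHom.ext fun m' => by
        simp only [AddMonoidHom.mk'_apply, AddMonoidHom.add_apply, Tensor.mk_add_left,
          QuotientAddGroup.mk_add])
  have hb : ∀ (a : A) (n : X) (m' : M'), b (op a • n) m' = b n (a • m') := fun a n m' => by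
    simp only [b, AddMonoidHom.mk'_apply, Tensor.mk_op_smul]
    exact key n _ _ (by rw [hh, hσ, hσ])
  have hlift : (Tensor.lift b hb).comp (Tensor.lTensor X h hh) = QuotientAddGroup.mk' R :=
    Tensor.hom_ext fun n m => by
      simp only [AddMonoidHom.comp_apply, Tensor.lTensor_mk, Tensor.lift_mk, b,
        AddMonoidHom.mk'_apply, QuotientAddGroup.mk'_apply]
      exact key n _ _ (hσ _)
  intro z hz
  rw [← QuotientAddGroup.eq_zero_iff, ← QuotientAddGroup.mk'_apply, ← hlift,
    AddMonoidHom.comp_apply, hz, map_zero]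

lemma Tensor.lTensor_lTensor_eq_self_of_homotopy {K : Type w₄} [AddCommGroup K] [PreMod A K]
    (i : K →+ M) (hi : i ∈ LHom A K M)
    (f : K →+ M') (hf : f ∈ LHom A K M')
    (f' : M' →+ K) (hf' : f' ∈ LHom A M' K)
    (s : M →+ K) (hs : s ∈ LHom A M K)
    (hhtpy : ∀ k, f' (f k) = k + s (i k)) {z : Tensor A X K} (hz : Tensor.lTensor X i hi z = 0) :
    Tensor.lTensor X f' hf' (Tensor.lTensor X f hf z) = z := by
  have h : ∀ z, Tensor.lTensor X f' hf' (Tensor.lTensor X f hf z)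
      = z + Tensor.lTensor X s hs (Tensor.lTensor X i hi z) := fun z =>
    Tensor.induction_on z (fun n k => by simp only [Tensor.lTensor_mk, hhtpy, Tensor.mk_add_right])
      fun x y hx hy => by simp only [map_add, hx, hy]; abel
  rw [h, hz, map_zero, add_zero]

end LTensor

section KerLTensorMap

variable {A : Type u} [NonUnitalRing A] (X : Type w) [AddCommGroup X] [PreMod Aᵐᵒᵖ X]
variable {K : Type w'} [AddCommGroup K] [PreMod A K] {P : Type w₂} [AddCommGroup P] [PreMod A P]
variable {K' : Type w₃} [AddCommGroup K'] [PreMod A K']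
variable {P' : Type w₄} [AddCommGroup P'] [PreMod A P']
variable (i : K →+ P) (hi : i ∈ LHom A K P)
variable (i' : K' →+ P') (hi' : i' ∈ LHom A K' P')

noncomputable def Tensor.kerLTensorMap (f : K →+ K') (hf : f ∈ LHom A K K')
    (u : P →+ P') (hu : u ∈ LHom A P P') (hcomm : ∀ k, i' (f k) = u (i k)) :
    (Tensor.lTensor X i hi).ker →+ (Tensor.lTensor X i' hi').ker :=
  ((Tensor.lTensor X f hf).comp (AddSubgroup.subtype _)).codRestrict _ fun z => by
    rw [AddMonoidHom.mem_ker, AddMonoidHom.comp_apply, AddSubgroup.coe_subtype,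
      Tensor.lTensor_lTensor_eq_of_comp_eq f hf i' hi' i hi u hu hcomm,
      AddMonoidHom.mem_ker.mp z.2, map_zero]

lemma Tensor.kerLTensorMap_kerLTensorMap_eq_self
    (f : K →+ K') (hf : f ∈ LHom A K K')
    (u : P →+ P') (hu : u ∈ LHom A P P') (hcomm : ∀ k, i' (f k) = u (i k))
    (f' : K' →+ K) (hf' : f' ∈ LHom A K' K)
    (u' : P' →+ P) (hu' : u' ∈ LHom A P' P)
    (hcomm' : ∀ k, i (f' k) = u' (i' k))
    (s : P →+ K) (hs : s ∈ LHom A P K) (hhtpy : ∀ k, f' (f k) = k + s (i k))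
    (z : (Tensor.lTensor X i hi).ker) :
    Tensor.kerLTensorMap X i' hi' i hi f' hf' u' hu' hcomm'
      (Tensor.kerLTensorMap X i hi i' hi' f hf u hu hcomm z) = z :=
  Subtype.ext (Tensor.lTensor_lTensor_eq_self_of_homotopy i hi f hf f' hf' s hs hhtpy z.2)

end KerLTensorMap

section FinFree

variable {A : Type u} [NonUnitalRing A] {I : Type v} (e : I → A)
variable {k : ℕ} (κ : Fin k → I)

variable {X : Type w} [AddCommGroup X] [PreMod Aᵐᵒᵖ X]

noncomputable def Tensor.coeff (j : Fin k) : Tensor A X (FinFree A fun j => e (κ j)) →+ X :=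
  Tensor.lift
    (AddMonoidHom.mk'
      (fun n => AddMonoidHom.mk' (fun q => op (q j : A) • n)
        (fun q q' => by rw [Pi.add_apply, AddSubgroup.coe_add, op_add, add_smul']))
      (fun n n' => AddMonoidHom.ext fun q => smul_add' _ n n'))
    (fun a n q => by
      change op (q j : A) • op a • n = op (a * q j) • n
      rw [op_mul, mul_smul'])

@[simp] lemma Tensor.coeff_mk (j : Fin k) (n : X) (q : FinFree A fun j => e (κ j)) :
    Tensor.coeff e κ j (Tensor.mk A X _ n q) = op (q j : A) • n :=
  Tensor.lift_mk _ _ n q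

lemma Tensor.op_smul_coeff (j : Fin k) (t : Tensor A X (FinFree A fun j => e (κ j))) :
    op (e (κ j)) • Tensor.coeff e κ j t = Tensor.coeff e κ j t := by
  induction t using Tensor.induction_on with
  | mk n q => rw [Tensor.coeff_mk, ← mul_smul', ← op_mul, (q j).2]
  | add x y hx hy => rw [map_add, smul_add', hx, hy]

variable [EnoughIdems A e]

noncomputable def FinFree.gen (j : Fin k) : FinFree A fun j => e (κ j) :=
  Pi.single j ⟨e (κ j), EnoughIdems.idem (κ j)⟩

lemma FinFree.smul_gen (a : A) (j : Fin k) :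
    a • FinFree.gen e κ j
      = Pi.single j (a • (⟨e (κ j), EnoughIdems.idem (κ j)⟩ : ↥(rIdl A (e (κ j))))) :=
  funext (Pi.apply_single (fun _ x => a • x) (fun _ => psmul_zero a) j _)

lemma FinFree.sum_smul_gen (q : FinFree A fun j => e (κ j)) :
    ∑ j, (q j : A) • FinFree.gen e κ j = q := by
  refine (Finset.sum_congr rfl fun j _ => ?_).trans (Finset.univ_sum_single q)
  rw [FinFree.smul_gen]
  exact congrArg (Pi.single j) (Subtype.ext (q j).2)

lemma Tensor.sum_mk_coeff_gen (t : Tensor A X (FinFree A fun j => e (κ j))) :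
    ∑ j, Tensor.mk A X _ (Tensor.coeff e κ j t) (FinFree.gen e κ j) = t := by
  induction t using Tensor.induction_on with
  | mk n q =>
    simp only [Tensor.coeff_mk, Tensor.mk_op_smul]
    rw [← Tensor.mk_sum_right, FinFree.sum_smul_gen]
  | add x y hx hy =>
    simp only [map_add, Tensor.mk_add_left, Finset.sum_add_distrib, hx, hy]

end FinFree

section UnitalPi

variable {A : Type u} [NonUnitalRing A] {I : Type v} (e : I → A)
variable {S : Type w} (N : S → Type w')
variable [∀ α, AddCommGroup (N α)] [∀ α, PreMod Aᵐᵒᵖ (N α)]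

/-- `∏ᵘ_α N_α`, the product in the category of unital right `A`-modules. -/
abbrev UnitalPi : Type (max w w') := ↥(RA Aᵐᵒᵖ (fun i => op (e i)) (∀ β, N β))

def UnitalPi.proj (α : S) : UnitalPi e N →+ N α :=
  AddMonoidHom.mk' (fun x => (x : ∀ β, N β) α) (fun _ _ => rfl)

variable [EnoughIdems A e] (M : Type w₂) [AddCommGroup M] [PreMod A M]

noncomputable def Tensor.piProj (α : S) : Tensor A (UnitalPi e N) M →+ Tensor A (N α) M :=
  Tensor.map (UnitalPi.proj e N α) (AddMonoidHom.id M) (fun _ _ => rfl) (fun _ _ => rfl)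

noncomputable def Tensor.toPi : Tensor A (UnitalPi e N) M →+ ∀ α, Tensor A (N α) M :=
  AddMonoidHom.pi (Tensor.piProj e N M)

variable {e N M}

@[simp] lemma Tensor.piProj_mk (α : S) (x : UnitalPi e N) (m : M) :
    Tensor.piProj e N M α (Tensor.mk A _ M x m) = Tensor.mk A (N α) M ((x : ∀ β, N β) α) m :=
  Tensor.map_mk _ _ _ _ _ _

lemma Tensor.piProj_lTensor {M' : Type w₃} [AddCommGroup M'] [PreMod A M'] (α : S)
    (f : M →+ M') (hf : f ∈ LHom A M M') (z : Tensor A (UnitalPi e N) M) :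
    Tensor.piProj e N M' α (Tensor.lTensor _ f hf z)
      = Tensor.lTensor _ f hf (Tensor.piProj e N M α z) :=
  Tensor.induction_on z (fun x m => by simp only [Tensor.lTensor_mk, Tensor.piProj_mk])
    fun x y hx hy => by rw [map_add, map_add, hx, hy, map_add, map_add]

lemma Tensor.toPi_lTensor {M' : Type w₃} [AddCommGroup M'] [PreMod A M']
    (f : M →+ M') (hf : f ∈ LHom A M M') (z : Tensor A (UnitalPi e N) M) :
    Tensor.toPi e N M' (Tensor.lTensor _ f hf z)
      = fun α => Tensor.lTensor _ f hf (Tensor.toPi e N M z α) :=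
  funext fun α => Tensor.piProj_lTensor α f hf z

section FinFree

variable (e N) {k : ℕ} (κ : Fin k → I)

noncomputable def Tensor.piCoeff (j : Fin k) :
    (∀ α, Tensor A (N α) (FinFree A fun j => e (κ j))) →+ UnitalPi e N :=
  (AddMonoidHom.pi fun α => (Tensor.coeff e κ j).comp (Pi.evalAddMonoidHom _ α)).codRestrict _
    fun t => mem_RA_of_smul_eq _ (κ j) (funext fun α => Tensor.op_smul_coeff e κ j (t α))

noncomputable def Tensor.ofPi :
    (∀ α, Tensor A (N α) (FinFree A fun j => e (κ j)))
      →+ Tensor A (UnitalPi e N) (FinFree A fun j => e (κ j)) :=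
  ∑ j, (Tensor.mkLeft (FinFree.gen e κ j)).comp (Tensor.piCoeff e N κ j)

variable {e N}

lemma Tensor.ofPi_toPi (z : Tensor A (UnitalPi e N) (FinFree A fun j => e (κ j))) :
    Tensor.ofPi e N κ (Tensor.toPi e N _ z) = z := by
  induction z using Tensor.induction_on with
  | mk x q =>
    simp only [Tensor.ofPi, AddMonoidHom.finsetSum_apply, AddMonoidHom.comp_apply]
    conv_rhs => rw [← FinFree.sum_smul_gen e κ q, Tensor.mk_sum_right]
    refine Finset.sum_congr rfl fun j _ => ?_
    rw [← Tensor.mk_op_smul]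
    refine congrArg (Tensor.mk A _ _ · _) (Subtype.ext (funext fun α => ?_))
    change Tensor.coeff e κ j (Tensor.piProj e N _ α (Tensor.mk A _ _ x q)) = _
    rw [Tensor.piProj_mk, Tensor.coeff_mk]
    rfl
  | add x y hx hy => rw [map_add, map_add, hx, hy]

lemma Tensor.toPi_ofPi (t : ∀ α, Tensor A (N α) (FinFree A fun j => e (κ j))) :
    Tensor.toPi e N _ (Tensor.ofPi e N κ t) = t := by
  funext α
  rw [Tensor.ofPi, AddMonoidHom.finsetSum_apply, map_sum, Finset.sum_apply]
  refine (Finset.sum_congr rfl fun j _ => ?_).trans (Tensor.sum_mk_coeff_gen e κ (t α))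
  exact Tensor.piProj_mk α _ _

theorem Tensor.toPi_bijective_of_finFree :
    Function.Bijective (Tensor.toPi e N (FinFree A fun j => e (κ j))) :=
  Function.bijective_iff_has_inverse.mpr
    ⟨Tensor.ofPi e N κ, Tensor.ofPi_toPi κ, Tensor.toPi_ofPi κ⟩

end FinFree

end UnitalPi

section FinitePresentation

variable {A : Type u} [NonUnitalRing A] {I : Type v} {e : I → A} [EnoughIdems A e]
variable {S : Type w} {N : S → Type w'}
variable [∀ α, AddCommGroup (N α)] [∀ α, PreMod Aᵐᵒᵖ (N α)]

/-- A four-lemma for the right exact functors `(∏ᵘ N) ⊗_A -` and `∏_α (N_α ⊗_A -)`. -/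
theorem Tensor.toPi_bijective_of_exact
    {M₂ : Type w₂} [AddCommGroup M₂] [PreMod A M₂]
    {M₁ : Type w₃} [AddCommGroup M₁] [PreMod A M₁]
    {M₀ : Type w₄} [AddCommGroup M₀] [PreMod A M₀]
    (f : M₂ →+ M₁) (hf : f ∈ LHom A M₂ M₁)
    (h : M₁ →+ M₀) (hh : h ∈ LHom A M₁ M₀)
    (hs : Function.Surjective h) (hex : f.range = h.ker)
    (h₂ : Function.Surjective (Tensor.toPi e N M₂))
    (h₁ : Function.Bijective (Tensor.toPi e N M₁)) :
    Function.Bijective (Tensor.toPi e N M₀) := by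
  constructor
  · refine (injective_iff_map_eq_zero _).mpr fun z hz => ?_
    obtain ⟨w, rfl⟩ := Tensor.lTensor_surjective h hh hs z
    have hw : ∀ α, Tensor.toPi e N M₁ w α ∈ (Tensor.lTensor (N α) f hf).range := fun α =>
      Tensor.ker_lTensor_le_range f hf h hh hs hex
        ((congrFun (Tensor.toPi_lTensor h hh w) α).symm.trans (congrFun hz α))
    choose y hy using hw
    obtain ⟨y, rfl⟩ := h₂ y
    obtain rfl : Tensor.lTensor _ f hf y = w :=
      h₁.1 (by rw [Tensor.toPi_lTensor]; exact funext hy)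
    refine Tensor.lTensor_lTensor_eq_zero f hf h hh (fun m => ?_) y
    rw [← AddMonoidHom.mem_ker, ← hex]
    exact ⟨m, rfl⟩
  · intro t
    choose w hw using fun α => Tensor.lTensor_surjective (X := N α) h hh hs (t α)
    obtain ⟨w, rfl⟩ := h₁.2 w
    exact ⟨Tensor.lTensor _ h hh w, by rw [Tensor.toPi_lTensor]; exact funext hw⟩

theorem Tensor.toPi_bijective_of_isFPn_one {M : Type w₂} [AddCommGroup M] [PreMod A M]
    (hM : IsFPn A e 1 M) : Function.Bijective (Tensor.toPi e N M) := by
  obtain ⟨k, ι, d, g, hg, h0, -⟩ := hM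
  exact Tensor.toPi_bijective_of_exact (d 0).1 (d 0).2 g.1 g.2 hg (h0 one_pos)
    (Tensor.toPi_bijective_of_finFree _).2 (Tensor.toPi_bijective_of_finFree _)

variable {K : Type w₂} [AddCommGroup K] [PreMod A K] {P : Type w₃} [AddCommGroup P] [PreMod A P]
variable (i : K →+ P) (hi : i ∈ LHom A K P)

noncomputable def Tensor.kerLTensorToPi :
    (Tensor.lTensor (UnitalPi e N) i hi).ker →+ ∀ α, (Tensor.lTensor (N α) i hi).ker :=
  AddMonoidHom.pi fun α => ((Tensor.piProj e N K α).comp (AddSubgroup.subtype _)).codRestrict _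
    fun z => by
      rw [AddMonoidHom.mem_ker, AddMonoidHom.comp_apply, AddSubgroup.coe_subtype,
        ← Tensor.piProj_lTensor, AddMonoidHom.mem_ker.mp z.2, map_zero]

theorem Tensor.kerLTensorToPi_bijective (hK : Function.Bijective (Tensor.toPi e N K))
    (hP : Function.Injective (Tensor.toPi e N P)) :
    Function.Bijective (Tensor.kerLTensorToPi (e := e) (N := N) i hi) := by
  constructor
  · refine (injective_iff_map_eq_zero _).mpr fun z hz => Subtype.ext (hK.1 ?_)
    rw [AddSubgroup.coe_zero, map_zero]
    exact funext fun α => congrArg Subtype.val (congrFun hz α)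
  · intro t
    obtain ⟨z, hz⟩ := hK.2 fun α => (t α : Tensor A (N α) K)
    have hmem : Tensor.lTensor _ i hi z = 0 := hP <| by
      rw [Tensor.toPi_lTensor, hz, map_zero]
      exact funext fun α => (t α).2
    exact ⟨⟨z, hmem⟩, funext fun α => Subtype.ext (congrFun hz α)⟩

lemma Tensor.kerLTensorToPi_kerLTensorMap
    {K' : Type w₄} [AddCommGroup K'] [PreMod A K']
    {P' : Type w₅} [AddCommGroup P'] [PreMod A P']
    (i' : K' →+ P') (hi' : i' ∈ LHom A K' P')
    (f : K →+ K') (hf : f ∈ LHom A K K')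
    (u : P →+ P') (hu : u ∈ LHom A P P') (hcomm : ∀ k, i' (f k) = u (i k))
    (z : (Tensor.lTensor (UnitalPi e N) i hi).ker) (α : S) :
    Tensor.kerLTensorToPi i' hi' (Tensor.kerLTensorMap _ i hi i' hi' f hf u hu hcomm z) α
      = Tensor.kerLTensorMap _ i hi i' hi' f hf u hu hcomm (Tensor.kerLTensorToPi i hi z α) :=
  Subtype.ext (Tensor.piProj_lTensor α f hf z.1)

end FinitePresentation

section LKer

variable {A : Type u} [NonUnitalRing A]
variable {M : Type w} [AddCommGroup M] [PreMod A M] {F : Type w'} [AddCommGroup F] [PreMod A F]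

def LKer (g : ↥(LHom A M F)) : AddSubgroup M := (g : M →+ F).ker

instance LKer.instPreMod (g : ↥(LHom A M F)) : PreMod A ↥(LKer g) where
  smul a x := ⟨a • x.1, by
    change (g : M →+ F) (a • x.1) = 0
    rw [g.2 a x.1, AddMonoidHom.mem_ker.mp x.2, psmul_zero]⟩
  smul_add' a x y := Subtype.ext (smul_add' a x.1 y.1)
  add_smul' a b x := Subtype.ext (add_smul' a b x.1)
  mul_smul' a b x := Subtype.ext (mul_smul' a b x.1)

lemma LKer.subtype_smul (g : ↥(LHom A M F)) (a : A) (x : ↥(LKer g)) :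
    (LKer g).subtype (a • x) = a • (LKer g).subtype x :=
  rfl

end LKer

section FP2

variable {A : Type u} [NonUnitalRing A] {I : Type v} {e : I → A}
variable {F : Type w} [AddCommGroup F] [PreMod A F]

theorem exists_surjective_isFPn_one_lKer_of_isFPn_two (hF : IsFPn A e 2 F) :
    ∃ (k : ℕ) (κ : Fin k → I) (g : ↥(LHom A (FinFree A fun j => e (κ j)) F)),
      Function.Surjective (g : (FinFree A fun j => e (κ j)) →+ F) ∧
        IsFPn A e 1 ↥(LKer g) := by
  obtain ⟨k, ι, d, g, hg, h0, h1⟩ := hF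
  let d₀ : (FinFree A fun j => e (ι 1 j)) →+ ↥(LKer g) :=
    (d 0 : (FinFree A fun j => e (ι 1 j)) →+ _).codRestrict (LKer g) fun q => by
      rw [LKer, ← h0 two_pos]
      exact ⟨q, rfl⟩
  have hd₀ : d₀ ∈ LHom A _ ↥(LKer g) := fun a q => Subtype.ext ((d 0).2 a q)
  refine ⟨k 0, ι 0, g, hg, fun s => k (s + 1), fun s => ι (s + 1), fun s => d (s + 1),
    ⟨d₀, hd₀⟩, fun x => ?_, fun _ => ?_, fun s hs => absurd hs (by omega)⟩
  · obtain ⟨q, hq⟩ : (x : FinFree A fun j => e (ι 0 j)) ∈ (d 0).1.range := by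
      rw [h0 two_pos]
      exact x.2
    exact ⟨q, Subtype.ext hq⟩
  · rw [h1 0 one_lt_two]
    ext q
    exact AddMonoidHom.mem_ker.trans ((Subtype.ext_iff (a1 := d₀ q) (a2 := 0)).symm.trans
      AddMonoidHom.mem_ker.symm)

end FP2

section TorComparison

variable {A : Type u} [NonUnitalRing A] {I : Type v} {e : I → A}
variable {F : Type w} [AddCommGroup F] [PreMod A F] {k : ℕ} {κ : Fin k → I}
variable (g : ↥(LHom A (FinFree A fun j => e (κ j)) F))
variable (hg : Function.Surjective (g : (FinFree A fun j => e (κ j)) →+ F))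

noncomputable def ofCover : ((I × F) →₀ A) →+ (FinFree A fun j => e (κ j)) :=
  Finsupp.liftAddHom fun p => AddMonoidHom.mk' (fun a => (a * e p.1) • Function.surjInv hg p.2)
    fun a b => by rw [add_mul, add_smul']

lemma ofCover_single (p : I × F) (a : A) :
    ofCover g hg (Finsupp.single p a) = (a * e p.1) • Function.surjInv hg p.2 :=
  Finsupp.liftAddHom_apply_single _ p a

lemma ofCover_smul (a : A) (x : (I × F) →₀ A) :
    ofCover g hg (a • x) = a • ofCover g hg x := by
  induction x using Finsupp.induction with
  | zero => rw [psmul_zero, map_zero, psmul_zero]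
  | single_add p b f _ _ ih =>
    rw [smul_add', map_add, map_add, smul_add', ih, finsupp_smul_single, ofCover_single,
      ofCover_single, mul_assoc, mul_smul']

lemma apply_ofCover (x : (I × F) →₀ A) : (g : _ →+ F) (ofCover g hg x) = covHom A e F x := by
  induction x using Finsupp.induction with
  | zero => simp
  | single_add p b f _ _ ih =>
    rw [map_add, map_add, map_add, ih, ofCover_single, g.2, Function.surjInv_eq hg p.2,
      covHom_single]

noncomputable def ofKK : ↥(KK A e F) →+ ↥(LKer g) :=
  ((ofCover g hg).comp (KK A e F).subtype).codRestrict _ fun y => by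
    rw [LKer, AddMonoidHom.mem_ker, AddMonoidHom.comp_apply, AddSubgroup.coe_subtype,
      apply_ofCover]
    exact y.2

lemma ofKK_smul (a : A) (y : ↥(KK A e F)) : ofKK g hg (a • y) = a • ofKK g hg y :=
  Subtype.ext (ofCover_smul g hg a y.1)

variable [EnoughIdems A e]

noncomputable def toCover : (FinFree A fun j => e (κ j)) →+ ((I × F) →₀ A) :=
  ∑ j, (Finsupp.singleAddHom (κ j, (g : _ →+ F) (FinFree.gen e κ j))).comp
    ((AddSubgroup.subtype _).comp (Pi.evalAddMonoidHom _ j))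

lemma toCover_apply (q : FinFree A fun j => e (κ j)) :
    toCover g q = ∑ j, Finsupp.single (κ j, (g : _ →+ F) (FinFree.gen e κ j)) (q j : A) := by
  simp [toCover]

lemma toCover_smul (a : A) (q : FinFree A fun j => e (κ j)) :
    toCover g (a • q) = a • toCover g q := by
  rw [toCover_apply, toCover_apply]
  exact (Finset.sum_congr rfl fun j _ => (finsupp_smul_single a _ _).symm).trans
    (map_sum (smulHom ((I × F) →₀ A) a) _ _).symm

lemma covHom_toCover (q : FinFree A fun j => e (κ j)) :
    covHom A e F (toCover g q) = (g : _ →+ F) q := by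
  conv_rhs => rw [← FinFree.sum_smul_gen e κ q, map_sum]
  rw [toCover_apply, map_sum]
  refine Finset.sum_congr rfl fun j _ => ?_
  have hq : (q j : A) * e (κ j) = q j := (q j).2
  rw [covHom_single, hq, g.2]

noncomputable def toKK : ↥(LKer g) →+ ↥(KK A e F) :=
  ((toCover g).comp (LKer g).subtype).codRestrict _ fun x => by
    rw [KK, AddMonoidHom.mem_ker, AddMonoidHom.comp_apply, AddSubgroup.coe_subtype,
      covHom_toCover]
    exact x.2

noncomputable def finFreeHomotopy : (FinFree A fun j => e (κ j)) →+ ↥(LKer g) :=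
  ((ofCover g hg).comp (toCover g) - AddMonoidHom.id _).codRestrict _ fun q => by
    rw [LKer, AddMonoidHom.mem_ker, AddMonoidHom.sub_apply, map_sub, AddMonoidHom.comp_apply,
      apply_ofCover, covHom_toCover, AddMonoidHom.id_apply, sub_self]

noncomputable def coverHomotopy : ((I × F) →₀ A) →+ ↥(KK A e F) :=
  ((toCover g).comp (ofCover g hg) - AddMonoidHom.id _).codRestrict _ fun x => by
    rw [KK, AddMonoidHom.mem_ker, AddMonoidHom.sub_apply, map_sub, AddMonoidHom.comp_apply,
      covHom_toCover, apply_ofCover, AddMonoidHom.id_apply, sub_self]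

lemma toKK_smul (a : A) (x : ↥(LKer g)) : toKK g (a • x) = a • toKK g x :=
  Subtype.ext (toCover_smul g a x.1)

lemma finFreeHomotopy_smul (a : A) (q : FinFree A fun j => e (κ j)) :
    finFreeHomotopy g hg (a • q) = a • finFreeHomotopy g hg q :=
  Subtype.ext <| by
    change ofCover g hg (toCover g (a • q)) - a • q = a • (ofCover g hg (toCover g q) - q)
    rw [toCover_smul, ofCover_smul, psmul_sub]

lemma coverHomotopy_smul (a : A) (x : (I × F) →₀ A) :
    coverHomotopy g hg (a • x) = a • coverHomotopy g hg x :=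
  Subtype.ext <| by
    change toCover g (ofCover g hg (a • x)) - a • x = a • (toCover g (ofCover g hg x) - x)
    rw [ofCover_smul, toCover_smul, psmul_sub]

lemma ofKK_toKK (x : ↥(LKer g)) : ofKK g hg (toKK g x) = x + finFreeHomotopy g hg x :=
  Subtype.ext (add_sub_cancel _ _).symm

lemma toKK_ofKK (y : ↥(KK A e F)) : toKK g (ofKK g hg y) = y + coverHomotopy g hg y :=
  Subtype.ext (add_sub_cancel _ _).symm

noncomputable def tor1EquivKerLTensor (X : Type w') [AddCommGroup X] [PreMod Aᵐᵒᵖ X] :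
    ↥(Tor1 A e F X) ≃+ (Tensor.lTensor X (LKer g).subtype (LKer.subtype_smul g)).ker where
  toFun := Tensor.kerLTensorMap X _ _ _ _ (ofKK g hg) (ofKK_smul g hg)
    (ofCover g hg) (ofCover_smul g hg) fun _ => rfl
  invFun := Tensor.kerLTensorMap X _ _ _ _ (toKK g) (toKK_smul g) (toCover g) (toCover_smul g)
    fun _ => rfl
  left_inv := Tensor.kerLTensorMap_kerLTensorMap_eq_self X _ _ _ _ _ _ _ _ _ _ _ _ _ _
    (coverHomotopy g hg) (coverHomotopy_smul g hg) (toKK_ofKK g hg)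
  right_inv := Tensor.kerLTensorMap_kerLTensorMap_eq_self X _ _ _ _ _ _ _ _ _ _ _ _ _ _
    (finFreeHomotopy g hg) (finFreeHomotopy_smul g hg) (ofKK_toKK g hg)
  map_add' := map_add _

lemma kerLTensorToPi_tor1EquivKerLTensor {S : Type w₂} {N : S → Type w₃}
    [∀ α, AddCommGroup (N α)] [∀ α, PreMod Aᵐᵒᵖ (N α)]
    (z : ↥(Tor1 A e F (UnitalPi e N))) (α : S) :
    Tensor.kerLTensorToPi _ (LKer.subtype_smul g) (tor1EquivKerLTensor g hg _ z) α
      = tor1EquivKerLTensor g hg (N α)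
          (Tensor.kerLTensorToPi (KK A e F).subtype (fun _ _ => rfl) z α) :=
  Tensor.kerLTensorToPi_kerLTensorMap _ _ _ _ (ofKK g hg) (ofKK_smul g hg) (ofCover g hg)
    (ofCover_smul g hg) (fun _ => rfl) z α

end TorComparison

end EIMod

theorem tor1_of_unital_product_iso_product_of_tor1_general
    (A : Type u) [NonUnitalRing A] {I : Type v} (e : I → A) [EnoughIdems A e]
    (F : Type u) [AddCommGroup F] [PreMod A F] (hF : IsFPn A e 2 F)
    (S : Type w) (N : S → Type u) [∀ α, AddCommGroup (N α)] [∀ α, PreMod Aᵐᵒᵖ (N α)] :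
    ∃ φ : ↥(Tor1 A e F (↥(RA Aᵐᵒᵖ (fun i => op (e i)) (∀ β, N β))))
        ≃+ (∀ α : S, ↥(Tor1 A e F (N α))),
      ∀ (z : ↥(Tor1 A e F (↥(RA Aᵐᵒᵖ (fun i => op (e i)) (∀ β, N β))))) (α : S),
        ((φ z α : ↥(Tor1 A e F (N α)))
            : Tensor A (N α) ↥(KK A e F))
          = projTorMap A e S N F α
            (z : Tensor A (↥(RA Aᵐᵒᵖ (fun i => op (e i)) (∀ β, N β))) ↥(KK A e F)) := by
  obtain ⟨k, κ, g, hg, hK⟩ := exists_surjective_isFPn_one_lKer_of_isFPn_two hF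
  let Λ := AddEquiv.ofBijective _ (Tensor.kerLTensorToPi_bijective (e := e) (N := N)
    (LKer g).subtype (LKer.subtype_smul g) (Tensor.toPi_bijective_of_isFPn_one hK)
    (Tensor.toPi_bijective_of_finFree κ).1)
  refine ⟨(tor1EquivKerLTensor g hg _).trans
    (Λ.trans (AddEquiv.piCongrRight fun α => (tor1EquivKerLTensor g hg (N α)).symm)),
    fun z α => ?_⟩
  change ((tor1EquivKerLTensor g hg (N α)).symm (Λ (tor1EquivKerLTensor g hg _ z) α) :
    Tensor A (N α) ↥(KK A e F)) = _
  rw [AddEquiv.ofBijective_apply, kerLTensorToPi_tor1EquivKerLTensor]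
  exact congrArg Subtype.val ((tor1EquivKerLTensor g hg (N α)).symm_apply_apply _)

/-- For a ring `A` with enough idempotents and a unital left `A`-module `F` of
type `FP₂`, for any family `{N_α}` of unital right `A`-modules there is an isomorphism
`Tor₁^A(∏^u_α N_α, F) ≅ ∏_α Tor₁^A(N_α, F)`, where `∏^u` is the product of unital right
`A`-modules; it is induced by the projections. -/
theorem tor1_of_unital_product_iso_product_of_tor1
    (A : Type u) [NonUnitalRing A] {I : Type v} (e : I → A) [EnoughIdems A e]
    (F : Type u) [AddCommGroup F] [PreMod A F] (hF : IsFPn A e 2 F)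
    (S : Type w) (N : S → Type u) [∀ α, AddCommGroup (N α)] [∀ α, PreMod Aᵐᵒᵖ (N α)]
    (hN : ∀ α, IsUnital Aᵐᵒᵖ (fun i => op (e i)) (N α)) :
    ∃ φ : ↥(Tor1 A e F (↥(RA Aᵐᵒᵖ (fun i => op (e i)) (∀ β, N β))))
        ≃+ (∀ α : S, ↥(Tor1 A e F (N α))),
      ∀ (z : ↥(Tor1 A e F (↥(RA Aᵐᵒᵖ (fun i => op (e i)) (∀ β, N β))))) (α : S),
        ((φ z α : ↥(Tor1 A e F (N α)))
            : Tensor A (N α) ↥(KK A e F))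
          = projTorMap A e S N F α
            (z : Tensor A (↥(RA Aᵐᵒᵖ (fun i => op (e i)) (∀ β, N β))) ↥(KK A e F)) :=
  tor1_of_unital_product_iso_product_of_tor1_general A e F hF S N
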